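/- Apolarity Lemma: For a homogeneous ideal I ⊆ R defining a scheme and F ∈ S_d, one has F ∈ (I_d)^⊥ (the orthogonal of the degree-d part of I under the apolarity pairing) if and only if I_{≤d} ⊆ Ann(F); in particular, if I is generated in degrees ≤ d, then F ∈ (I_d)^⊥ if and only if I ⊆ Ann(F). -/

import Mathlib

open MvPolynomial

/-- The iterated differential operator `Y^β = ∏ᵢ ∂ᵢ^{βᵢ}`. -/
noncomputable def diffOp {k : Type*} [CommSemiring k] {N : ℕ} (β : Fin N →₀ ℕ) :
    Module.End k (MvPolynomial (Fin N) k) :=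
  (List.ofFn fun i : Fin N => ((MvPolynomial.pderiv i).toLinearMap :
      Module.End k (MvPolynomial (Fin N) k)) ^ (β i)).prod

/-- The apolarity action `G ∘ F` of `R = k[Y₀,…,Yₙ]` on `S = k[X₀,…,Xₙ]` by differentiation,
extended `k`-linearly from `Y^β ∘ X^α`. -/
noncomputable def apolar {k : Type*} [CommSemiring k] {N : ℕ}
    (G F : MvPolynomial (Fin N) k) : MvPolynomial (Fin N) k :=
  (∑ β ∈ G.support, G.coeff β • diffOp β) F

/-- The factorial of a multi-index, `α! = ∏ᵢ αᵢ!`. -/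
noncomputable def mfact {N : ℕ} (α : Fin N →₀ ℕ) : ℕ := α.prod fun _ m => m.factorial

section
variable {k : Type*} [CommSemiring k] {N : ℕ}

noncomputable def Pd (i : Fin N) : Module.End k (MvPolynomial (Fin N) k) :=
  (MvPolynomial.pderiv i).toLinearMap

lemma pderiv_commute (i j : Fin N) : Commute (Pd (k := k) i) (Pd j) := by
  apply LinearMap.ext
  intro f
  show pderiv i (pderiv j f) = pderiv j (pderiv i f)
  induction f using MvPolynomial.induction_on' with
  | monomial α c =>
    simp only [pderiv_monomial]
    rcases eq_or_ne i j with rfl | hij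
    · rfl
    · rw [Finsupp.tsub_apply, Finsupp.tsub_apply, Finsupp.single_apply,
        Finsupp.single_apply, if_neg hij, if_neg (Ne.symm hij)]
      rw [tsub_tsub, tsub_tsub, add_comm (Finsupp.single j 1)]
      rw [Nat.sub_zero, Nat.sub_zero]; ring_nf
  | add p q hp hq => simp_all [map_add]

lemma list_prod_mul {M ι : Type*} [Monoid M] (l : List ι) (f g : ι → M)
    (hfg : ∀ i j, Commute (g i) (f j)) :
    (l.map fun i => f i * g i).prod = (l.map f).prod * (l.map g).prod := by
  induction l with
  | nil => simp
  | cons i l ih =>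
    simp only [List.map_cons, List.prod_cons, ih]
    have hc : Commute (g i) ((l.map f).prod) :=
      Commute.list_prod_right _ _ (by
        intro x hx
        obtain ⟨j, _, rfl⟩ := List.mem_map.mp hx
        exact hfg i j)
    rw [mul_assoc, ← mul_assoc (g i), hc.eq, mul_assoc, mul_assoc]

lemma diffOp_eq_map (β : Fin N →₀ ℕ) :
    diffOp (k := k) β = ((List.finRange N).map fun i => Pd (k := k) i ^ β i).prod := by
  rw [diffOp, List.ofFn_eq_map]; rfl

set_option maxHeartbeats 1000000 in
lemma diffOp_add (β γ : Fin N →₀ ℕ) :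
    diffOp (k := k) (β + γ) = diffOp β * diffOp γ := by
  have h := list_prod_mul (List.finRange N) (fun i => Pd (k := k) i ^ β i)
    (fun i => Pd i ^ γ i) (fun i j => (pderiv_commute i j).pow_pow _ _)
  rw [diffOp_eq_map, diffOp_eq_map, diffOp_eq_map, ← h]
  exact congrArg List.prod (List.map_congr_left (fun i _ => by
    show Pd i ^ (β + γ) i = Pd i ^ β i * Pd i ^ γ i
    rw [Finsupp.add_apply, pow_add]))

lemma diffOp_zero : diffOp (k := k) (N := N) 0 = 1 := by
  unfold diffOp
  rw [List.prod_eq_one]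
  intro x hx
  obtain ⟨j, rfl⟩ := List.mem_ofFn.mp hx
  simp

lemma list_map_prod_single {M ι : Type*} [Monoid M] (l : List ι) (f : ι → M) (i : ι)
    (hi : i ∈ l) (hn : l.Nodup) (h1 : ∀ j ∈ l, j ≠ i → f j = 1) :
    (l.map f).prod = f i := by
  induction l with
  | nil => simp at hi
  | cons a l ih =>
    simp only [List.map_cons, List.prod_cons]
    rcases List.mem_cons.mp hi with rfl | hmem
    · rw [List.prod_eq_one, mul_one]
      intro x hx
      obtain ⟨j, hj, rfl⟩ := List.mem_map.mp hx
      exact h1 j (List.mem_cons_of_mem _ hj) (fun h => (List.nodup_cons.mp hn).1 (h ▸ hj))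
    · rw [h1 a List.mem_cons_self (fun h => (List.nodup_cons.mp hn).1 (h ▸ hmem)),
        one_mul]
      exact ih hmem (List.nodup_cons.mp hn).2 fun j hj => h1 j (List.mem_cons_of_mem _ hj)

lemma diffOp_single (i : Fin N) (m : ℕ) :
    diffOp (k := k) (Finsupp.single i m) = Pd i ^ m := by
  unfold diffOp
  rw [List.ofFn_eq_map]
  rw [list_map_prod_single _ _ i (List.mem_finRange i) (List.nodup_finRange N)]
  · rw [Finsupp.single_eq_same]; rfl
  · intro j _ hj
    rw [Finsupp.single_eq_of_ne' (Ne.symm hj), pow_zero]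

lemma Pd_pow_monomial (i : Fin N) (m : ℕ) (α : Fin N →₀ ℕ) (c : k) :
    (Pd i ^ m) (monomial α c) =
      if m ≤ α i then monomial (α - Finsupp.single i m) (c * ((α i).descFactorial m : k))
      else 0 := by
  induction m generalizing α c with
  | zero => simp
  | succ m ih =>
    rw [pow_succ, Module.End.mul_apply]
    have h1 : (Pd (k := k) i) (monomial α c) =
        monomial (α - Finsupp.single i 1) (c * (α i : k)) := pderiv_monomial
    rw [h1, ih]
    rcases Nat.eq_zero_or_pos (α i) with h0 | hpos
    · rw [h0]
      simp
    · obtain ⟨s, hs⟩ : ∃ s, α i = s + 1 := ⟨α i - 1, by omega⟩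
      have hai : (α - Finsupp.single i 1 : Fin N →₀ ℕ) i = s := by
        rw [Finsupp.tsub_apply, Finsupp.single_eq_same, hs]; omega
      rw [hai]
      by_cases hms : m ≤ s
      · rw [if_pos hms, if_pos (by omega)]
        congr 1
        · rw [tsub_tsub, ← Finsupp.single_add, add_comm]
        · rw [hs, Nat.succ_descFactorial_succ, Nat.cast_mul, Nat.cast_succ]
          ring
      · rw [if_neg hms, if_neg (by omega)]

lemma diffOp_monomial (β α : Fin N →₀ ℕ) (c : k) :
    diffOp β (monomial α c) =
      if β ≤ α then monomial (α - β) (c * ((∏ i, (α i).descFactorial (β i) : ℕ) : k))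
      else 0 := by
  induction β using Finsupp.induction with
  | zero =>
    rw [diffOp_zero, if_pos (zero_le : (0 : Fin N →₀ ℕ) ≤ α)]
    simp
  | single_add a n β' ha' hn ih =>
    rw [diffOp_add, Module.End.mul_apply, diffOp_single, ih]
    have hb'a : β' a = 0 := Finsupp.notMem_support_iff.mp ha'
    have hle : (Finsupp.single a n + β' ≤ α) ↔ (n ≤ α a ∧ β' ≤ α) := by
      constructor
      · intro h
        refine ⟨?_, ?_⟩
        · have := Finsupp.le_def.mp h a
          simpa [hb'a] using this
        · exact le_trans (Finsupp.le_def.mpr fun i => le_add_self) h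
      · rintro ⟨h1, h2⟩
        refine Finsupp.le_def.mpr fun i => ?_
        rcases eq_or_ne i a with rfl | hia
        · simpa [hb'a] using h1
        · simpa [Finsupp.single_eq_of_ne' (Ne.symm hia)] using Finsupp.le_def.mp h2 i
    by_cases hβ' : β' ≤ α
    · rw [if_pos hβ', Pd_pow_monomial]
      have hsub : (α - β' : Fin N →₀ ℕ) a = α a := by
        rw [Finsupp.tsub_apply, hb'a, Nat.sub_zero]
      rw [hsub]
      by_cases hna : n ≤ α a
      · rw [if_pos hna, if_pos (hle.mpr ⟨hna, hβ'⟩)]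
        congr 1
        · rw [tsub_tsub, add_comm]
        · have hD : (∏ i, (α i).descFactorial ((Finsupp.single a n + β') i)) =
              ((α a).descFactorial n) * ∏ i, (α i).descFactorial (β' i) := by
            rw [← Finset.mul_prod_erase Finset.univ _ (Finset.mem_univ a),
              ← Finset.mul_prod_erase Finset.univ
                (fun i => (α i).descFactorial (β' i)) (Finset.mem_univ a)]
            rw [hb'a]
            simp only [Finsupp.add_apply, Finsupp.single_eq_same, hb'a, add_zero,
              Nat.descFactorial_zero, one_mul]
            congr 1
            refine Finset.prod_congr rfl fun i hi => ?_
            have hia : i ≠ a := (Finset.mem_erase.mp hi).1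
            rw [Finsupp.single_eq_of_ne' (Ne.symm hia), zero_add]
          rw [hD, Nat.cast_mul]
          ring
      · rw [if_neg hna, if_neg (fun h => hna (hle.mp h).1)]
    · rw [if_neg hβ', map_zero, if_neg (fun h => hβ' (hle.mp h).2)]


lemma apolar_eq_sum (G F : MvPolynomial (Fin N) k) :
    apolar G F = ∑ β ∈ G.support, G.coeff β • diffOp β F := by
  rw [apolar, LinearMap.sum_apply]
  rfl

lemma apolar_add (G1 G2 F : MvPolynomial (Fin N) k) :
    apolar (G1 + G2) F = apolar G1 F + apolar G2 F := by
  have h : ∀ G : MvPolynomial (Fin N) k, apolar G F =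
      (AddMonoidAlgebra.coeff G).sum (fun β c => c • diffOp (k := k) β F) := fun G => by
    rw [sum_def, apolar_eq_sum]
  rw [h, h, h, AddMonoidAlgebra.coeff_add]
  exact Finsupp.sum_add_index' (fun a => zero_smul k _) (fun a b1 b2 => add_smul b1 b2 _)

lemma apolar_zero (F : MvPolynomial (Fin N) k) : apolar 0 F = 0 := by
  rw [apolar_eq_sum]
  simp

lemma apolar_sum {ι : Type*} (s : Finset ι) (G : ι → MvPolynomial (Fin N) k)
    (F : MvPolynomial (Fin N) k) :
    apolar (∑ i ∈ s, G i) F = ∑ i ∈ s, apolar (G i) F := by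
  classical
  induction s using Finset.induction_on with
  | empty => simp [apolar_zero]
  | insert x s hx ih => rw [Finset.sum_insert hx, Finset.sum_insert hx, apolar_add, ih]

lemma apolar_monomial (β : Fin N →₀ ℕ) (c : k) (F : MvPolynomial (Fin N) k) :
    apolar (monomial β c) F = c • diffOp β F := by
  classical
  rw [apolar_eq_sum, support_monomial]
  split_ifs with h
  · simp [h]
  · simp [coeff_monomial]

lemma apolar_mul_monomial (γ : Fin N →₀ ℕ) (G F : MvPolynomial (Fin N) k) :
    apolar (monomial γ 1 * G) F = diffOp γ (apolar G F) := by
  conv_lhs => rw [G.as_sum, Finset.mul_sum]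
  rw [apolar_sum, apolar_eq_sum, map_sum]
  refine Finset.sum_congr rfl fun β _ => ?_
  rw [monomial_mul, one_mul, apolar_monomial, diffOp_add, Module.End.mul_apply, map_smul]

lemma degree_sub_of_le {α β : Fin N →₀ ℕ} (h : β ≤ α) :
    (α - β).degree = α.degree - β.degree := by
  have h2 : (α - β) + β = α := tsub_add_cancel_of_le h
  have h3 : (α - β).degree + β.degree = α.degree := by
    rw [← h2, Finsupp.degree_eq_weight_one, map_add]; rw [h2]
  omega

lemma diffOp_homog {F : MvPolynomial (Fin N) k} {d : ℕ} (hF : F.IsHomogeneous d)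
    (β : Fin N →₀ ℕ) : (diffOp β F).IsHomogeneous (d - β.degree) := by
  rw [← mem_homogeneousSubmodule]
  have hrw : diffOp (k := k) β F = ∑ α ∈ F.support, diffOp β (monomial α (F.coeff α)) := by
    conv_lhs => rw [F.as_sum]
    rw [map_sum]
  rw [hrw]
  refine Submodule.sum_mem _ fun α hα => ?_
  rw [diffOp_monomial, mem_homogeneousSubmodule]
  have hαd : α.degree = d := by
    rw [Finsupp.degree_eq_weight_one]; exact hF (mem_support_iff.mp hα)
  split_ifs with h
  · exact isHomogeneous_monomial _ (by rw [degree_sub_of_le h, hαd])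
  · exact isHomogeneous_zero _ _ _

lemma diffOp_zero_of_gt {F : MvPolynomial (Fin N) k} {d : ℕ} (hF : F.IsHomogeneous d)
    {β : Fin N →₀ ℕ} (h : d < β.degree) : diffOp β F = 0 := by
  conv_lhs => rw [F.as_sum]
  rw [map_sum]
  refine Finset.sum_eq_zero fun α hα => ?_
  rw [diffOp_monomial, if_neg]
  intro hle
  have hαd : α.degree = d := by
    rw [Finsupp.degree_eq_weight_one]; exact hF (mem_support_iff.mp hα)
  have : β.degree ≤ α.degree := by
    rw [Finsupp.degree_eq_weight_one]
    have h2 := tsub_add_cancel_of_le hle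
    calc (Finsupp.weight 1) β ≤ (Finsupp.weight 1) (α - β) + (Finsupp.weight 1) β := le_add_self
    _ = (Finsupp.weight 1) α := by rw [← map_add, h2]
  omega

lemma apolar_isHomog {G F : MvPolynomial (Fin N) k} {e d : ℕ}
    (hG : G.IsHomogeneous e) (hF : F.IsHomogeneous d) :
    apolar G F ∈ homogeneousSubmodule (Fin N) k (d - e) := by
  rw [apolar_eq_sum]
  refine Submodule.sum_mem _ fun β hβ => ?_
  have hβe : β.degree = e := by
    rw [Finsupp.degree_eq_weight_one]; exact hG (mem_support_iff.mp hβ)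
  exact Submodule.smul_mem _ _ (by rw [mem_homogeneousSubmodule, ← hβe]; exact diffOp_homog hF β)

lemma apolar_vanish_of_gt {G F : MvPolynomial (Fin N) k} {e d : ℕ}
    (hG : G.IsHomogeneous e) (hF : F.IsHomogeneous d) (h : d < e) : apolar G F = 0 := by
  rw [apolar_eq_sum]
  refine Finset.sum_eq_zero fun β hβ => ?_
  have hβe : β.degree = e := by
    rw [Finsupp.degree_eq_weight_one]; exact hG (mem_support_iff.mp hβ)
  rw [diffOp_zero_of_gt hF (by rw [hβe]; exact h), smul_zero]

end

section
variable {k : Type*} [Field k] [CharZero k] {N : ℕ}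

lemma eq_of_le_of_degree_eq {α γ : Fin N →₀ ℕ} (h : γ ≤ α) (hd : α.degree = γ.degree) :
    α = γ := by
  have h2 : α - γ + γ = α := tsub_add_cancel_of_le h
  have h3 : (α - γ).degree = α.degree - γ.degree := degree_sub_of_le h
  have h4 : (α - γ).degree + γ.degree = α.degree := by
    rw [← h2, Finsupp.degree_eq_weight_one, map_add]; rw [h2]
  have h5 : (α - γ).degree = 0 := by omega
  have h6 : α - γ = 0 := (Finsupp.degree_eq_zero_iff _).mp h5
  rw [← h2, h6, zero_add]

lemma homog_eq_zero {H : MvPolynomial (Fin N) k} {m : ℕ} (hH : H.IsHomogeneous m)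
    (hv : ∀ γ : Fin N →₀ ℕ, γ.degree = m → diffOp γ H = 0) : H = 0 := by
  by_contra h0
  obtain ⟨γ, hγ⟩ := Finset.nonempty_iff_ne_empty.mpr
    (fun h => h0 (MvPolynomial.support_eq_empty.mp h))
  have hγc : H.coeff γ ≠ 0 := mem_support_iff.mp hγ
  have hγd : γ.degree = m := by
    rw [Finsupp.degree_eq_weight_one]; exact hH hγc
  have hz := hv γ hγd
  have hrw : diffOp (k := k) γ H = ∑ α ∈ H.support, diffOp γ (monomial α (H.coeff α)) := by
    conv_lhs => rw [H.as_sum]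
    rw [map_sum]
  rw [hrw, Finset.sum_eq_single γ] at hz
  · rw [diffOp_monomial, if_pos le_rfl, tsub_self] at hz
    have hc := MvPolynomial.monomial_eq_zero.mp hz
    refine absurd hc (mul_ne_zero hγc ?_)
    rw [Nat.cast_ne_zero]
    exact Finset.prod_ne_zero_iff.mpr fun i _ => fun hz => absurd (Nat.descFactorial_eq_zero_iff_lt.mp hz) (lt_irrefl _)
  · intro α hα hne
    rw [diffOp_monomial, if_neg]
    intro hle
    have hαd : α.degree = m := by
      rw [Finsupp.degree_eq_weight_one]; exact hH (mem_support_iff.mp hα)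
    exact hne (eq_of_le_of_degree_eq hle (by rw [hαd, hγd]))
  · intro h; exact absurd hγ h

end

/-- Apolarity Lemma: for a homogeneous ideal `I` and `F` homogeneous of degree `d`,
`F ∈ (I_d)^⊥` iff `I_{≤d} ⊆ Ann(F)`; moreover if `I` is generated in degrees `≤ d` then
`F ∈ (I_d)^⊥` iff `I ⊆ Ann(F)`. -/
theorem stmt_4 {k : Type*} [Field k] [CharZero k] {n d : ℕ}
    (I : Ideal (MvPolynomial (Fin (n + 1)) k))
    (hhom : ∀ G ∈ I, ∀ i : ℕ, homogeneousComponent i G ∈ I)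
    (F : MvPolynomial (Fin (n + 1)) k)
    (hF : F ∈ homogeneousSubmodule (Fin (n + 1)) k d) :
    ((∀ G ∈ I, G ∈ homogeneousSubmodule (Fin (n + 1)) k d → apolar G F = 0) ↔
      (∀ G ∈ I, G.totalDegree ≤ d → apolar G F = 0))
    ∧ (∀ Sgen : Set (MvPolynomial (Fin (n + 1)) k), I = Ideal.span Sgen →
        (∀ G ∈ Sgen, G.totalDegree ≤ d) →
        ((∀ G ∈ I, G ∈ homogeneousSubmodule (Fin (n + 1)) k d → apolar G F = 0) ↔
          ∀ G ∈ I, apolar G F = 0)) := by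
  rw [mem_homogeneousSubmodule] at hF
  have key : (∀ G ∈ I, G ∈ homogeneousSubmodule (Fin (n + 1)) k d → apolar G F = 0) →
      ∀ e ≤ d, ∀ Ge ∈ I, Ge.IsHomogeneous e → apolar Ge F = 0 := by
    intro hL e hed Ge hGeI hGe
    refine homog_eq_zero (m := d - e)
      (mem_homogeneousSubmodule _ _ |>.mp (apolar_isHomog hGe hF)) fun γ hγd => ?_
    have hmem : monomial γ (1 : k) * Ge ∈ I := I.mul_mem_left _ hGeI
    have hhomprod : (monomial γ (1 : k) * Ge).IsHomogeneous d := by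
      have := (isHomogeneous_monomial (1 : k) hγd).mul hGe
      rwa [Nat.sub_add_cancel hed] at this
    have := hL _ hmem (mem_homogeneousSubmodule _ _ |>.mpr hhomprod)
    rwa [apolar_mul_monomial] at this
  have part1 : (∀ G ∈ I, G ∈ homogeneousSubmodule (Fin (n + 1)) k d → apolar G F = 0) ↔
      (∀ G ∈ I, G.totalDegree ≤ d → apolar G F = 0) := by
    constructor
    · intro hL G hGI hGd
      conv_lhs => rw [← sum_homogeneousComponent G]
      rw [apolar_sum]
      refine Finset.sum_eq_zero fun e he => ?_
      have hed : e ≤ d := le_trans (Nat.lt_succ_iff.mp (Finset.mem_range.mp he)) hGd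
      exact key hL e hed _ (hhom G hGI e) (homogeneousComponent_isHomogeneous e G)
    · intro hR G hGI hGhom
      exact hR G hGI ((mem_homogeneousSubmodule _ _ |>.mp hGhom).totalDegree_le)
  refine ⟨part1, fun Sgen hspan hgens => ?_⟩
  constructor
  · intro hL G hGI
    conv_lhs => rw [← sum_homogeneousComponent G]
    rw [apolar_sum]
    refine Finset.sum_eq_zero fun e he => ?_
    by_cases hed : e ≤ d
    · exact key hL e hed _ (hhom G hGI e) (homogeneousComponent_isHomogeneous e G)
    · exact apolar_vanish_of_gt (homogeneousComponent_isHomogeneous e G) hF (by omega)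
  · intro hR G hGI _
    exact hR G hGI
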